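/- Let F : ℝ → ℝ be a continuous distribution function with quantile function Q, and let Fₙ be a sequence of nondecreasing right-continuous functions with supₜ |Fₙ(t) - F(t)| → 0 and Qₙ(p) = inf{t : Fₙ(t) ≥ p}. If F' = f exists, is continuous and strictly positive on [Q(p₀) - δ, Q(p₁) + δ], then sup_{p₀ ≤ p ≤ p₁} |Qₙ(p) - Q(p)| → 0. -/
import Mathlib


open Filter Set

theorem quantile_uniform_consistency
    (F : ℝ → ℝ) (f : ℝ → ℝ) (hmono : Monotone F) (hcont : Continuous F)
    (hbot : Tendsto F atBot (nhds 0)) (htop : Tendsto F atTop (nhds 1))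
    (Fn : ℕ → ℝ → ℝ) (hFnmono : ∀ n, Monotone (Fn n))
    (hFnrc : ∀ n, ∀ t : ℝ, ContinuousWithinAt (Fn n) (Ici t) t)
    (hunif : ∀ ε > (0 : ℝ), ∃ N, ∀ n ≥ N, ∀ t : ℝ, |Fn n t - F t| ≤ ε)
    (Q : ℝ → ℝ) (hQ : ∀ p, Q p = sInf {t : ℝ | p ≤ F t})
    (Qn : ℕ → ℝ → ℝ) (hQn : ∀ n p, Qn n p = sInf {t : ℝ | p ≤ Fn n t})
    (p₀ p₁ : ℝ) (hp₀ : 0 < p₀) (hp : p₀ ≤ p₁) (hp₁ : p₁ < 1)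
    (δ m : ℝ) (hδ : 0 < δ) (hm : 0 < m)
    (hderiv : ∀ t ∈ Icc (Q p₀ - δ) (Q p₁ + δ), HasDerivAt F (f t) t)
    (hfcont : ContinuousOn f (Icc (Q p₀ - δ) (Q p₁ + δ)))
    (hfpos : ∀ t ∈ Icc (Q p₀ - δ) (Q p₁ + δ), m ≤ f t) :
    ∀ ε > (0 : ℝ), ∃ N, ∀ n ≥ N, ∀ p ∈ Icc p₀ p₁, |Qn n p - Q p| ≤ ε := by
  -- pick t₀ with F t₀ ≤ p₀/2 and t₁ with (1+p₁)/2 ≤ F t₁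
  obtain ⟨t₀, ht₀⟩ : ∃ t₀, F t₀ ≤ p₀ / 2 :=
    (hbot.eventually (eventually_le_nhds (by linarith))).exists
  obtain ⟨t₁, ht₁⟩ : ∃ t₁, (1 + p₁) / 2 ≤ F t₁ :=
    (htop.eventually (eventually_ge_nhds (by linarith))).exists
  have ht₀₁ : t₀ < t₁ := by
    by_contra h
    have := hmono (not_lt.1 h)
    linarith
  -- basic facts about the sets {t | p ≤ F t}
  have hbdd : ∀ p ∈ Icc p₀ p₁, t₀ ∈ lowerBounds {t : ℝ | p ≤ F t} := by
    intro p hp t ht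
    by_contra h
    have := hmono (le_of_lt (not_le.1 h))
    simp only [mem_setOf_eq] at ht
    have := hp.1
    linarith
  have hne : ∀ p ∈ Icc p₀ p₁, t₁ ∈ {t : ℝ | p ≤ F t} := by
    intro p hp
    simp only [mem_setOf_eq]
    have := hp.2
    linarith
  -- F (Q p) = p for p ∈ [p₀, p₁]
  have hQF : ∀ p ∈ Icc p₀ p₁, F (Q p) = p := by
    intro p hp
    have hset : IsClosed {t : ℝ | p ≤ F t} := isClosed_le continuous_const hcont
    have hmem : Q p ∈ {t : ℝ | p ≤ F t} := by
      rw [hQ]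
      exact hset.csInf_mem ⟨t₁, hne p hp⟩ ⟨t₀, hbdd p hp⟩
    obtain ⟨c, _, hc⟩ := intermediate_value_Icc ht₀₁.le hcont.continuousOn
      (show p ∈ Icc (F t₀) (F t₁) from ⟨by linarith [hp.1], by linarith [hp.2]⟩)
    have hle : Q p ≤ c := by
      rw [hQ]; exact csInf_le ⟨t₀, hbdd p hp⟩ (by simp [hc])
    have := hmono hle
    rw [hc] at this
    exact le_antisymm this hmem
  -- Q is monotone on [p₀, p₁]
  have hQr : ∀ p ∈ Icc p₀ p₁, Q p ∈ Icc (Q p₀) (Q p₁) := by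
    intro p hpm
    constructor
    · rw [hQ p₀, hQ p]
      exact csInf_le_csInf ⟨t₀, hbdd p₀ ⟨le_refl _, hp⟩⟩ ⟨t₁, hne p hpm⟩
        (fun t ht => le_trans hpm.1 ht)
    · rw [hQ p₁, hQ p]
      exact csInf_le_csInf ⟨t₀, hbdd p hpm⟩ ⟨t₁, hne p₁ ⟨hp, le_refl _⟩⟩
        (fun t ht => le_trans hpm.2 ht)
  -- mean value inequality on the interval
  set D := Icc (Q p₀ - δ) (Q p₁ + δ) with hD
  have hDconv : Convex ℝ D := convex_Icc _ _
  have hFdiff : DifferentiableOn ℝ F (interior D) := fun t ht =>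
    ((hderiv t (interior_subset ht)).differentiableAt).differentiableWithinAt
  have hderiv' : ∀ x ∈ interior D, m ≤ deriv F x := by
    intro x hx
    rw [(hderiv x (interior_subset hx)).deriv]
    exact hfpos x (interior_subset hx)
  have hMVT : ∀ a ∈ D, ∀ b ∈ D, a ≤ b → m * (b - a) ≤ F b - F a :=
    hDconv.mul_sub_le_image_sub_of_le_deriv hcont.continuousOn hFdiff hderiv'
  -- the main argument
  intro ε hε
  set ε' := min ε δ with hε'def
  have hε'pos : 0 < ε' := lt_min hε hδ
  have hε'δ : ε' ≤ δ := min_le_right _ _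
  have hη : 0 < min (m * ε' / 2) ((1 - p₁) / 2) := by
    apply lt_min
    · positivity
    · linarith
  obtain ⟨N, hN⟩ := hunif _ hη
  refine ⟨N, fun n hn p hp => ?_⟩
  have herr : ∀ t, |Fn n t - F t| ≤ min (m * ε' / 2) ((1 - p₁) / 2) := hN n hn
  have herr1 : ∀ t, F t - m * ε' / 2 ≤ Fn n t := by
    intro t
    have h := (abs_le.1 (herr t)).1
    have := min_le_left (m * ε' / 2) ((1 - p₁) / 2)
    linarith
  have herr2 : ∀ t, Fn n t ≤ F t + m * ε' / 2 := by
    intro t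
    have h := (abs_le.1 (herr t)).2
    have := min_le_left (m * ε' / 2) ((1 - p₁) / 2)
    linarith
  have hQpD1 : Q p + ε' ∈ D := by
    have := hQr p hp
    exact ⟨by linarith [this.1, hε'pos], by linarith [this.2, hε'δ]⟩
  have hQpD2 : Q p - ε' ∈ D := by
    have := hQr p hp
    exact ⟨by linarith [this.1, hε'δ], by linarith [this.2, hε'pos]⟩
  have hQpD : Q p ∈ D := by
    have := hQr p hp
    exact ⟨by linarith [this.1, hδ], by linarith [this.2, hδ]⟩
  -- the set for Fn
  have hSne : t₁ ∈ {t : ℝ | p ≤ Fn n t} := by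
    simp only [mem_setOf_eq]
    have h := (abs_le.1 (herr t₁)).1
    have h2 := min_le_right (m * ε' / 2) ((1 - p₁) / 2)
    have := hp.2
    linarith
  have hSlb : Q p - ε' ∈ lowerBounds {t : ℝ | p ≤ Fn n t} := by
    intro t ht
    simp only [mem_setOf_eq] at ht
    by_contra h
    push_neg at h
    have h1 : F t ≤ F (Q p - ε') := hmono h.le
    have h2 : m * (Q p - (Q p - ε')) ≤ F (Q p) - F (Q p - ε') :=
      hMVT _ hQpD2 _ hQpD (by linarith [hε'pos])
    have h3 := herr2 t
    have h4 := hQF p hp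
    nlinarith [hε'pos, hm]
  -- upper bound for Qn
  have hup : Qn n p ≤ Q p + ε' := by
    rw [hQn]
    apply csInf_le ⟨_, hSlb⟩
    simp only [mem_setOf_eq]
    have h1 : m * (Q p + ε' - Q p) ≤ F (Q p + ε') - F (Q p) :=
      hMVT _ hQpD _ hQpD1 (by linarith [hε'pos])
    have h2 := herr1 (Q p + ε')
    have h3 := hQF p hp
    nlinarith [hε'pos, hm]
  have hlo : Q p - ε' ≤ Qn n p := by
    rw [hQn]
    exact le_csInf ⟨t₁, hSne⟩ (fun t ht => hSlb ht)
  rw [abs_le]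
  constructor
  · have := min_le_left ε δ
    linarith
  · have := min_le_left ε δ
    linarith
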